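/- Let f be a boolean function on n variables, and for each i ∈ [n] let g_i be a boolean function on m_i variables. Let F be the composed boolean function on the disjoint union of the variable sets, F(x_1, …, x_n) := f(g_1(x_1), …, g_n(x_n)). Fix an input X = (x_1, …, x_n) and set y := (g_1(x_1), …, g_n(x_n)). Then the minimal blocks of F at X are exactly the sets of the form ⋃_{i∈B} B_i, where B is a minimal block of f at y and, for each i ∈ B, B_i is a minimal block of g_i at x_i (with B_i regarded as a subset of the coordinates of the i-th input slot). -/

import Mathlib

open Filter

namespace BS

variable {I : Type*} [Fintype I] [DecidableEq I]

/-- Flip the bits of `x` indexed by `B`. -/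
def flipSet (x : I → Bool) (B : Finset I) : I → Bool :=
  fun i => if i ∈ B then !(x i) else x i

/-- `B` is a block of `f` at `x`. -/
def IsBlock (f : (I → Bool) → Bool) (x : I → Bool) (B : Finset I) : Prop :=
  f (flipSet x B) ≠ f x

/-- Block sensitivity of `f` at `x`: the maximum number of pairwise disjoint blocks. -/
noncomputable def bsAt (f : (I → Bool) → Bool) (x : I → Bool) : ℕ :=
  sSup {k | ∃ B : Fin k → Finset I, (∀ t, IsBlock f x (B t)) ∧
    ∀ t t', t ≠ t' → Disjoint (B t) (B t')}

/-- Block sensitivity of `f`. -/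
noncomputable def bs (f : (I → Bool) → Bool) : ℕ :=
  sSup {k | ∃ x, k = bsAt f x}

/-- `b`-block sensitivity of `f`. -/
noncomputable def bsb (f : (I → Bool) → Bool) (b : Bool) : ℕ :=
  sSup {k | ∃ x, f x = b ∧ k = bsAt f x}

/-- `M`-fold block sensitivity of `f` at `x`. -/
noncomputable def bsMAt (f : (I → Bool) → Bool) (M : ℕ) (x : I → Bool) : ℕ :=
  sSup {k | ∃ B : Fin k → Finset I, (∀ t, IsBlock f x (B t)) ∧
    ∀ i : I, (Finset.univ.filter (fun t => i ∈ B t)).card ≤ M}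

/-- `M`-fold `b`-block sensitivity of `f`. -/
noncomputable def bsMb (f : (I → Bool) → Bool) (M : ℕ) (b : Bool) : ℕ :=
  sSup {k | ∃ x, f x = b ∧ k = bsMAt f M x}

/-- Fractional block sensitivity of `f` at `x`. -/
noncomputable def fbsAt (f : (I → Bool) → Bool) (x : I → Bool) : ℝ :=
  sSup {s | ∃ lam : Finset I → ℝ, (∀ B, 0 ≤ lam B) ∧
    (∀ B, ¬ IsBlock f x B → lam B = 0) ∧
    (∀ i : I, ∑ B ∈ Finset.univ.filter (fun B : Finset I => i ∈ B), lam B ≤ 1) ∧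
    s = ∑ B : Finset I, lam B}

/-- Fractional block sensitivity of `f`. -/
noncomputable def fbs (f : (I → Bool) → Bool) : ℝ :=
  sSup {s | ∃ x, s = fbsAt f x}

/-- Fractional `b`-block sensitivity of `f`. -/
noncomputable def fbsb (f : (I → Bool) → Bool) (b : Bool) : ℝ :=
  sSup {s | ∃ x, f x = b ∧ s = fbsAt f x}

/-- Certificate complexity of `f` at `x`. -/
noncomputable def CAt (f : (I → Bool) → Bool) (x : I → Bool) : ℕ :=
  sInf {k | ∃ S : Finset I, (∀ B, IsBlock f x B → (S ∩ B).Nonempty) ∧ k = S.card}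

/-- Certificate complexity of `f`. -/
noncomputable def Cm (f : (I → Bool) → Bool) : ℕ :=
  sSup {k | ∃ x, k = CAt f x}

/-- `b`-certificate complexity of `f`. -/
noncomputable def Cb (f : (I → Bool) → Bool) (b : Bool) : ℕ :=
  sSup {k | ∃ x, f x = b ∧ k = CAt f x}

/-- Fractional certificate complexity of `f` at `x`. -/
noncomputable def fCAt (f : (I → Bool) → Bool) (x : I → Bool) : ℝ :=
  sInf {s | ∃ w : I → ℝ, (∀ i, 0 ≤ w i ∧ w i ≤ 1) ∧
    (∀ B, IsBlock f x B → 1 ≤ ∑ i ∈ B, w i) ∧ s = ∑ i, w i}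

/-- Fractional certificate complexity of `f`. -/
noncomputable def fC (f : (I → Bool) → Bool) : ℝ :=
  sSup {s | ∃ x, s = fCAt f x}

/-- Composition `f ∘ g` of boolean functions. -/
def comp {J : Type*} [Fintype J] [DecidableEq J]
    (f : (I → Bool) → Bool) (g : (J → Bool) → Bool) :
    ((I × J) → Bool) → Bool :=
  fun x => f (fun i => g (fun j => x (i, j)))

/-- `k`-fold iterated composition `f^(k)` of an `n`-variate boolean function; the
variables of `f^(k)` are indexed by strings in `Fin k → Fin n`.  `f^(0)` is the
univariate identity function. -/
def iter {n : ℕ} (f : (Fin n → Bool) → Bool) :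
    (k : ℕ) → ((Fin k → Fin n) → Bool) → Bool
  | 0, x => x (fun i => i.elim0)
  | k + 1, x => f (fun i => iter f k (fun s => x (Fin.cons i s)))

/-- Spectral radius of a real square matrix: the maximum of `|μ|` over the complex
eigenvalues `μ` of the matrix. -/
noncomputable def specRad {m : Type*} [Fintype m] [DecidableEq m]
    (A : Matrix m m ℝ) : ℝ :=
  sSup {r | ∃ μ : ℂ, μ ∈ spectrum ℂ (A.map Complex.ofReal) ∧ r = ‖μ‖}

end BS

namespace BS

/-- `B` is a minimal block of `f` at `x`: a block that is minimal under inclusion. -/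
def MinBlock {I : Type*} [Fintype I] [DecidableEq I]
    (f : (I → Bool) → Bool) (x : I → Bool) (B : Finset I) : Prop :=
  IsBlock f x B ∧ ∀ B' ⊆ B, IsBlock f x B' → B' = B

end BS

/-!
Flipping the bits of `S` in `X` flips `gᵢ(xᵢ)` exactly for the slots `i` whose slice `Sᵢ` is a
block of `gᵢ`, so `S` is a block of `F` iff the set `T(S)` of these slots is a block of `f`.
If `S` is a minimal block, then any `⋃_{i ∈ B} {i} × Cᵢ` with `B` a block of `f` and blocks
`Cᵢ ⊆ Sᵢ` of `gᵢ` is a block of `F` inside `S`, hence equals `S`; choosing `B ⊆ T(S)` or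
`Cᵢ ⊆ Sᵢ` shows that `T(S)` and every `Sᵢ` are minimal and that
`S = ⋃_{i ∈ T(S)} {i} × Sᵢ`. Conversely, a sub-block `S'` of `⋃_{i ∈ B} {i} × Bᵢ` has
`T(S') ⊆ B`, hence `T(S') = B`, and each slice `S'ᵢ ⊆ Bᵢ` is then a block of `gᵢ`, hence equal
to `Bᵢ`.
-/

namespace BS

section Flip

variable {I : Type*} [DecidableEq I]

@[simp]
lemma flipSet_empty (x : I → Bool) : flipSet x ∅ = x := by
  funext i; simp [flipSet]

lemma not_isBlock_empty (f : (I → Bool) → Bool) (x : I → Bool) : ¬ IsBlock f x ∅ := by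
  simp [IsBlock]

lemma apply_flipSet_of_isBlock {f : (I → Bool) → Bool} {x : I → Bool} {C : Finset I}
    (h : IsBlock f x C) : f (flipSet x C) = !f x := by
  unfold IsBlock at h
  cases hfx : f x <;> simp_all

lemma apply_flipSet_of_not_isBlock {f : (I → Bool) → Bool} {x : I → Bool} {C : Finset I}
    (h : ¬ IsBlock f x C) : f (flipSet x C) = f x :=
  not_not.1 h

end Flip

section Sigma

variable {ι : Type*} {κ : ι → Type*}

def sigmaComp (f : (ι → Bool) → Bool) (g : (i : ι) → (κ i → Bool) → Bool) :
    ((i : ι) × κ i → Bool) → Bool :=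
  fun x => f fun i => g i fun j => x ⟨i, j⟩

def innerValues (g : (i : ι) → (κ i → Bool) → Bool) (x : (i : ι) × κ i → Bool) :
    ι → Bool :=
  fun i => g i fun j => x ⟨i, j⟩

lemma sigmaComp_apply (f : (ι → Bool) → Bool) (g : (i : ι) → (κ i → Bool) → Bool)
    (x : (i : ι) × κ i → Bool) : sigmaComp f g x = f (innerValues g x) :=
  rfl

variable [DecidableEq ι] [∀ i, DecidableEq (κ i)] [∀ i, Fintype (κ i)]

def slice (S : Finset ((i : ι) × κ i)) (i : ι) : Finset (κ i) :=
  Finset.univ.filter fun j => ⟨i, j⟩ ∈ S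

@[simp]
lemma mem_slice {S : Finset ((i : ι) × κ i)} {i : ι} {j : κ i} :
    j ∈ slice S i ↔ ⟨i, j⟩ ∈ S := by
  simp [slice]

lemma slice_mono {S S' : Finset ((i : ι) × κ i)} (h : S ⊆ S') (i : ι) :
    slice S i ⊆ slice S' i :=
  fun _ hj => mem_slice.2 (h (mem_slice.1 hj))

lemma slice_sigma (B : Finset ι) (C : (i : ι) → Finset (κ i)) (i : ι) :
    slice (B.sigma C) i = if i ∈ B then C i else ∅ := by
  ext j
  split_ifs with h <;> simp [h]

lemma sigma_subset_of_subset_slice {B : Finset ι} {C : (i : ι) → Finset (κ i)}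
    {S : Finset ((i : ι) × κ i)} (h : ∀ i ∈ B, C i ⊆ slice S i) : B.sigma C ⊆ S := by
  rintro ⟨i, j⟩ hij
  rw [Finset.mem_sigma] at hij
  exact mem_slice.1 (h i hij.1 hij.2)

lemma flipSet_slice (X : (i : ι) × κ i → Bool) (S : Finset ((i : ι) × κ i)) (i : ι) :
    (fun j => flipSet X S ⟨i, j⟩) = flipSet (fun j => X ⟨i, j⟩) (slice S i) := by
  funext j; simp [flipSet]

variable [Fintype ι]

open Classical in
noncomputable def blockSlots (g : (i : ι) → (κ i → Bool) → Bool)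
    (X : (i : ι) × κ i → Bool) (S : Finset ((i : ι) × κ i)) : Finset ι :=
  Finset.univ.filter fun i => IsBlock (g i) (fun j => X ⟨i, j⟩) (slice S i)

variable {g : (i : ι) → (κ i → Bool) → Bool} {X : (i : ι) × κ i → Bool}

lemma mem_blockSlots {S : Finset ((i : ι) × κ i)} {i : ι} :
    i ∈ blockSlots g X S ↔ IsBlock (g i) (fun j => X ⟨i, j⟩) (slice S i) := by
  simp [blockSlots]

lemma innerValues_flipSet (S : Finset ((i : ι) × κ i)) :
    innerValues g (flipSet X S) = flipSet (innerValues g X) (blockSlots g X S) := by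
  funext i
  change g i (fun j => flipSet X S ⟨i, j⟩) = flipSet (innerValues g X) (blockSlots g X S) i
  rw [flipSet_slice]
  by_cases hi : i ∈ blockSlots g X S
  · rw [apply_flipSet_of_isBlock (mem_blockSlots.1 hi)]
    simp [flipSet, hi, innerValues]
  · rw [apply_flipSet_of_not_isBlock (mt mem_blockSlots.2 hi)]
    simp [flipSet, hi, innerValues]

lemma isBlock_sigmaComp_iff (f : (ι → Bool) → Bool) (S : Finset ((i : ι) × κ i)) :
    IsBlock (sigmaComp f g) X S ↔ IsBlock f (innerValues g X) (blockSlots g X S) := by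
  simp only [IsBlock, sigmaComp_apply, innerValues_flipSet]

lemma blockSlots_subset_of_subset_sigma {S : Finset ((i : ι) × κ i)} {B : Finset ι}
    {C : (i : ι) → Finset (κ i)} (h : S ⊆ B.sigma C) : blockSlots g X S ⊆ B := by
  intro i hi
  by_contra hiB
  have hempty : slice S i = ∅ := by
    simpa [slice_sigma, hiB] using slice_mono h i
  exact not_isBlock_empty _ _ (hempty ▸ mem_blockSlots.1 hi)

lemma blockSlots_sigma {B : Finset ι} {C : (i : ι) → Finset (κ i)}
    (hC : ∀ i ∈ B, IsBlock (g i) (fun j => X ⟨i, j⟩) (C i)) :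
    blockSlots g X (B.sigma C) = B := by
  ext i
  rw [mem_blockSlots, slice_sigma]
  by_cases hi : i ∈ B
  · simp only [hi, if_true, hC i hi]
  · simp only [hi, if_false, not_isBlock_empty]

variable {f : (ι → Bool) → Bool} {S : Finset ((i : ι) × κ i)}

lemma minBlock_sigmaComp_sigma {B : Finset ι} {C : (i : ι) → Finset (κ i)}
    (hB : MinBlock f (innerValues g X) B)
    (hC : ∀ i ∈ B, MinBlock (g i) (fun j => X ⟨i, j⟩) (C i)) :
    MinBlock (sigmaComp f g) X (B.sigma C) := by
  have hslots : blockSlots g X (B.sigma C) = B := blockSlots_sigma fun i hi => (hC i hi).1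
  refine ⟨by rw [isBlock_sigmaComp_iff, hslots]; exact hB.1, fun S' hS' hblock => ?_⟩
  have hslots' : blockSlots g X S' = B :=
    hB.2 _ (blockSlots_subset_of_subset_sigma hS') ((isBlock_sigmaComp_iff f S').1 hblock)
  have hslice : ∀ i ∈ B, slice S' i = C i := fun i hi =>
    (hC i hi).2 _ (by simpa [slice_sigma, hi] using slice_mono hS' i)
      (mem_blockSlots.1 (hslots' ▸ hi))
  exact hS'.antisymm (sigma_subset_of_subset_slice fun i hi => (hslice i hi).ge)

namespace MinBlock

lemma sigma_eq (hS : MinBlock (sigmaComp f g) X S) {B : Finset ι}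
    {C : (i : ι) → Finset (κ i)} (hCS : ∀ i ∈ B, C i ⊆ slice S i)
    (hC : ∀ i ∈ B, IsBlock (g i) (fun j => X ⟨i, j⟩) (C i))
    (hB : IsBlock f (innerValues g X) B) : B.sigma C = S :=
  hS.2 _ (sigma_subset_of_subset_slice hCS) <| by
    rwa [isBlock_sigmaComp_iff, blockSlots_sigma hC]

lemma sigma_slice_blockSlots (hS : MinBlock (sigmaComp f g) X S) :
    (blockSlots g X S).sigma (slice S) = S :=
  hS.sigma_eq (fun _ _ => subset_rfl) (fun _ hi => mem_blockSlots.1 hi)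
    ((isBlock_sigmaComp_iff f S).1 hS.1)

lemma minBlock_blockSlots (hS : MinBlock (sigmaComp f g) X S) :
    MinBlock f (innerValues g X) (blockSlots g X S) := by
  refine ⟨(isBlock_sigmaComp_iff f S).1 hS.1, fun B hBS hB => ?_⟩
  have hC : ∀ i ∈ B, IsBlock (g i) (fun j => X ⟨i, j⟩) (slice S i) :=
    fun i hi => mem_blockSlots.1 (hBS hi)
  calc B = blockSlots g X (B.sigma (slice S)) := (blockSlots_sigma hC).symm
    _ = blockSlots g X S := by rw [hS.sigma_eq (fun _ _ => subset_rfl) hC hB]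

lemma minBlock_slice (hS : MinBlock (sigmaComp f g) X S) {i : ι} (hi : i ∈ blockSlots g X S) :
    MinBlock (g i) (fun j => X ⟨i, j⟩) (slice S i) := by
  refine ⟨mem_blockSlots.1 hi, fun C hCS hC => ?_⟩
  have hsigma : (blockSlots g X S).sigma (Function.update (slice S) i C) = S := by
    refine hS.sigma_eq (fun k _ => ?_) (fun k hk => ?_) ((isBlock_sigmaComp_iff f S).1 hS.1)
    · rcases eq_or_ne k i with rfl | hki
      · simpa using hCS
      · simp [hki]
    · rcases eq_or_ne k i with rfl | hki
      · simpa using hC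
      · simpa [hki] using mem_blockSlots.1 hk
  simpa [slice_sigma, hi] using congrArg (slice · i) hsigma

end MinBlock

end Sigma

end BS

open BS in
/-- Let `F(x₁,…,xₙ) = f(g₁(x₁),…,gₙ(xₙ))` be the composition of `f`
with functions `gᵢ` on disjoint variable sets, and fix an input `X` with
`y := (g₁(x₁),…,gₙ(xₙ))`.  Then the minimal blocks of `F` at `X` are exactly the sets
`⋃_{i ∈ B} {i} × Bᵢ` where `B` is a minimal block of `f` at `y` and, for `i ∈ B`,
`Bᵢ` is a minimal block of `gᵢ` at `xᵢ`. -/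
theorem minBlock_comp (n : ℕ) (m : Fin n → ℕ) (f : (Fin n → Bool) → Bool)
    (g : (i : Fin n) → ((Fin (m i) → Bool) → Bool))
    (X : ((i : Fin n) × Fin (m i)) → Bool) :
    ∀ S : Finset ((i : Fin n) × Fin (m i)),
      MinBlock (fun x : ((i : Fin n) × Fin (m i)) → Bool =>
          f (fun i => g i (fun j => x ⟨i, j⟩))) X S ↔
        ∃ (B : Finset (Fin n)) (Bi : (i : Fin n) → Finset (Fin (m i))),
          MinBlock f (fun i => g i (fun j => X ⟨i, j⟩)) B ∧
          (∀ i ∈ B, MinBlock (g i) (fun j => X ⟨i, j⟩) (Bi i)) ∧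
          S = B.sigma (fun i => Bi i) := by
  intro S
  constructor
  · intro hS
    exact ⟨blockSlots g X S, slice S, hS.minBlock_blockSlots, fun i hi => hS.minBlock_slice hi,
      hS.sigma_slice_blockSlots.symm⟩
  · rintro ⟨B, C, hB, hC, rfl⟩
    exact minBlock_sigmaComp_sigma hB hC
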